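/- arXiv:1806.05614 — 4 statements merged into one kernel-verified Lean document; each statement's English description precedes it below -/
import Mathlib

section
/- Let (a,b) ∈ Λ₃ and x ∈ [-a/2, 0]. Then the determinant of the 3×3 matrix with rows (B₂(x+2/b-2a), B₂(x+2/b), B₂(x+2/b+a)), (B₂(x+1/b-2a), B₂(x+1/b), B₂(x+1/b+a)), (B₂(x-1/b-2a), B₂(x-1/b), B₂(x-1/b+a)) equals B₂(x+2/b-2a)·B₂(x+1/b)·B₂(x-1/b+a), and this quantity is strictly positive. -/
noncomputable def B2 (x : ℝ) : ℝ := max (1 - |x|) 0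

lemma B2_zero {t : ℝ} (h : 1 ≤ t) : B2 t = 0 := by
  have : |t| = t := abs_of_nonneg (by linarith)
  simp [B2, this]; linarith

lemma B2_pos {t : ℝ} (h : |t| < 1) : 0 < B2 t := by
  simp [B2]; exact h

theorem stmt14 (a b : ℝ) (hab : (1/2 ≤ a ∧ a ≤ 4/5 ∧ 4/(2+3*a) < b ∧ b ≤ 6/(2+5*a) ∧ 1 < b))
    (x : ℝ) (hx : x ∈ Set.Icc (-a/2) 0) :
    Matrix.det !![B2 (x + 2/b - 2*a), B2 (x + 2/b), B2 (x + 2/b + a);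
                  B2 (x + 1/b - 2*a), B2 (x + 1/b), B2 (x + 1/b + a);
                  B2 (x - 1/b - 2*a), B2 (x - 1/b), B2 (x - 1/b + a)] =
      B2 (x + 2/b - 2*a) * B2 (x + 1/b) * B2 (x - 1/b + a) ∧
    0 < B2 (x + 2/b - 2*a) * B2 (x + 1/b) * B2 (x - 1/b + a) := by
  obtain ⟨ha1, ha2, hb1, hb2, hb3⟩ := hab
  obtain ⟨hx1, hx2⟩ := hx
  have hb0 : (0:ℝ) < b := by linarith
  have hu1 : (2+5*a)/6 ≤ 1/b := by
    rw [div_le_div_iff₀ (by norm_num) hb0]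
    rw [le_div_iff₀ (by linarith)] at hb2
    linarith
  have hu2 : 1/b < (2+3*a)/4 := by
    rw [div_lt_div_iff₀ hb0 (by norm_num)]
    rw [div_lt_iff₀ (by linarith)] at hb1
    linarith
  have hu3 : 1/b < 1 := by
    rw [div_lt_one hb0]; exact hb3
  have h12 : B2 (x + 2/b) = 0 := by
    apply B2_zero
    have : 2/b = 2 * (1/b) := by ring
    rw [this]; linarith
  have h13 : B2 (x + 2/b + a) = 0 := by
    apply B2_zero
    have : 2/b = 2 * (1/b) := by ring
    rw [this]; linarith
  have h23 : B2 (x + 1/b + a) = 0 := by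
    apply B2_zero; linarith
  have p1 : 0 < B2 (x + 2/b - 2*a) := by
    apply B2_pos; rw [abs_lt]
    have : 2/b = 2 * (1/b) := by ring
    rw [this]; constructor <;> linarith
  have p2 : 0 < B2 (x + 1/b) := by
    apply B2_pos; rw [abs_lt]; constructor <;> linarith
  have p3 : 0 < B2 (x - 1/b + a) := by
    apply B2_pos; rw [abs_lt]; constructor <;> linarith
  constructor
  · rw [Matrix.det_fin_three]
    simp only [Matrix.cons_val', Matrix.cons_val_zero, Matrix.cons_val_one, Matrix.head_cons,
      Matrix.empty_val', Matrix.cons_val_fin_one, Matrix.head_fin_const, Matrix.cons_val_two,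
      Matrix.tail_cons, Matrix.of_apply]
    rw [h12, h13, h23]; ring
  · positivity
end

section
/- Let (a,b) ∈ Λ₃ and x ∈ (a - 1/b, 1 - 2/b + a). Define f(x) = 3x² - (2 - 7/b + 7a)x - (1 + 1/b - 2a)(1 - 2/b + a). Then f(x) > 0. -/
/-!
Write `c = 1 - 2/b + a` for the right endpoint. The bound `b ≤ 6/(2+5a)` together with
`a ≥ 1/2` gives both `c ≤ 0` and `6c ≤ 2 - 7/b + 7a`, i.e. `c` lies left of the vertex of `f`,
so `f` is strictly decreasing on `(-∞, c]`. Hence `f x > f c = -2ac ≥ 0` for `x < c`.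
-/

theorem quadratic_lt_of_lt_of_two_mul_le {α β γ x y : ℝ} (hα : 0 < α) (hxy : x < y)
    (hy : 2 * α * y ≤ β) : α * y ^ 2 - β * y - γ < α * x ^ 2 - β * x - γ := by
  have hslope : α * (x + y) < β := by nlinarith
  nlinarith [mul_pos (sub_pos.2 hxy) (sub_pos.2 hslope)]

theorem stmt16 (a b : ℝ) (hab : (1/2 ≤ a ∧ a ≤ 4/5 ∧ 4/(2+3*a) < b ∧ b ≤ 6/(2+5*a) ∧ 1 < b))
    (x : ℝ) (hx : x ∈ Set.Ioo (a - 1/b) (1 - 2/b + a)) :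
    0 < 3*x^2 - (2 - 7/b + 7*a)*x - (1 + 1/b - 2*a)*(1 - 2/b + a) := by
  obtain ⟨ha, -, -, hb, hb1⟩ := hab
  have hb0 : 0 < b := by linarith
  have h : 2 + 5 * a ≤ 6 * b⁻¹ := by
    rw [← div_eq_mul_inv, le_div_iff₀ hb0]
    rwa [le_div_iff₀ (by linarith), mul_comm] at hb
  simp only [div_eq_mul_inv] at hx ⊢
  have hc : 1 - 2 * b⁻¹ + a ≤ 0 := by linarith
  have hvertex : 2 * 3 * (1 - 2 * b⁻¹ + a) ≤ 2 - 7 * b⁻¹ + 7 * a := by linarith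
  calc 0 ≤ -2 * a * (1 - 2 * b⁻¹ + a) := by nlinarith
    _ = 3 * (1 - 2 * b⁻¹ + a) ^ 2 - (2 - 7 * b⁻¹ + 7 * a) * (1 - 2 * b⁻¹ + a)
          - (1 + 1 * b⁻¹ - 2 * a) * (1 - 2 * b⁻¹ + a) := by ring
    _ < _ := quadratic_lt_of_lt_of_two_mul_le three_pos hx.2 hvertex
end

section
/- Let (a,b) ∈ Λ₃ and x ∈ [-a/2, 0]. Then the 4×4 matrix D(x) = [[B₂(x+2/b-2a), B₂(x+2/b-a), 0, 0], [B₂(x+1/b-2a), B₂(x+1/b-a), B₂(x+1/b), 0], [0, B₂(x-a), B₂(x), B₂(x+a)], [0, 0, B₂(x-1/b), B₂(x-1/b+a)]] is invertible, i.e., its determinant is nonzero. -/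
lemma B2_nonneg (y : ℝ) : 0 ≤ B2 y := le_max_right _ _

lemma B2_of_nonneg_of_le_one {y : ℝ} (h₀ : 0 ≤ y) (h₁ : y ≤ 1) : B2 y = 1 - y := by
  rw [B2, abs_of_nonneg h₀, max_eq_left (by linarith)]

lemma B2_of_nonpos_of_neg_one_le {y : ℝ} (h₀ : y ≤ 0) (h₁ : -1 ≤ y) : B2 y = 1 + y := by
  rw [B2, abs_of_nonpos h₀, max_eq_left (by linarith), sub_neg_eq_add]

lemma B2_of_le_neg_one {y : ℝ} (h : y ≤ -1) : B2 y = 0 := by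
  rw [B2, abs_of_nonpos (by linarith), max_eq_right (by linarith)]

lemma B2_of_one_le {y : ℝ} (h : 1 ≤ y) : B2 y = 0 := by
  rw [B2, abs_of_nonneg (by linarith), max_eq_right (by linarith)]

section BandDeterminant

variable {R : Type*} [CommRing R]

lemma det_fin_four_band (p q r s u v w y z c : R) :
    Matrix.det !![p, q, 0, 0; r, s, u, 0; 0, v, w, y; 0, 0, z, c] =
      (p * s - q * r) * (w * c - y * z) - p * u * v * c := by
  simp [Matrix.det_succ_row_zero, Fin.sum_univ_succ, Fin.succAbove]
  ring

lemma det_fin_four_band_pos [LinearOrder R] [IsStrictOrderedRing R] {p q r s u v w y z c : R}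
    (hpu : 0 < p * u) (hM₁ : p * u ≤ p * s - q * r)
    (hvc : 0 ≤ v * c) (hM₂ : v * c < w * c - y * z) :
    0 < Matrix.det !![p, q, 0, 0; r, s, u, 0; 0, v, w, y; 0, 0, z, c] := by
  rw [det_fin_four_band]
  nlinarith [mul_pos (hpu.trans_le hM₁) (sub_pos.2 hM₂), mul_nonneg hvc (sub_nonneg.2 hM₁)]

end BandDeterminant

/-- `(a, 1/t) ∈ Λ₃` and `x ∈ [-a/2, 0]`. -/
structure IsAdmissible (a t x : ℝ) : Prop where
  half_le : 1 / 2 ≤ a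
  le_four_fifths : a ≤ 4 / 5
  lt_one : t < 1
  lower : 2 + 5 * a ≤ 6 * t
  upper : 4 * t < 2 + 3 * a
  neg_half_le : -a / 2 ≤ x
  nonpos : x ≤ 0

lemma isAdmissible_one_div {a b x : ℝ}
    (hab : 1/2 ≤ a ∧ a ≤ 4/5 ∧ 4/(2+3*a) < b ∧ b ≤ 6/(2+5*a) ∧ 1 < b)
    (hx : x ∈ Set.Icc (-a/2) 0) : IsAdmissible a (1 / b) x := by
  obtain ⟨ha₁, ha₂, hb₁, hb₂, hb₃⟩ := hab
  have hb : 0 < b := by linarith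
  rw [div_lt_iff₀ (by linarith)] at hb₁
  rw [le_div_iff₀ (by linarith)] at hb₂
  refine ⟨ha₁, ha₂, (div_lt_one hb).2 hb₃, ?_, ?_, hx.1, hx.2⟩
  · rw [mul_one_div, le_div_iff₀ hb]; linarith
  · rw [mul_one_div, div_lt_iff₀ hb]; linarith

namespace IsAdmissible

variable {a t x : ℝ}

lemma mul_le_upper_minor (h : IsAdmissible a t x) :
    (1 - (x + 2*t - 2*a)) * (1 - (x + t)) ≤
      (1 - (x + 2*t - 2*a)) * B2 (x + t - a) - B2 (x + 2*t - a) * (1 + (x + t - 2*a)) := by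
  obtain ⟨ha₁, ha₂, ht₁, ht₂, ht₃, hx₁, hx₂⟩ := h
  rcases le_or_gt (x + 2*t - a) 1 with hq | hq
  · rw [B2_of_nonneg_of_le_one (by linarith) hq]
    rcases le_or_gt (x + t - a) 0 with hs | hs
    · rw [B2_of_nonpos_of_neg_one_le hs (by linarith)]
      nlinarith
    · rw [B2_of_nonneg_of_le_one hs.le (by linarith)]
      nlinarith
  · rw [B2_of_one_le hq.le]
    rcases le_or_gt (x + t - a) 0 with hs | hs
    · rw [B2_of_nonpos_of_neg_one_le hs (by linarith)]
      nlinarith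
    · rw [B2_of_nonneg_of_le_one hs.le (by linarith)]
      nlinarith

lemma mul_lt_lower_minor (h : IsAdmissible a t x) :
    B2 (x - a) * (1 + (x - t + a)) <
      (1 + x) * (1 + (x - t + a)) - (1 - (x + a)) * B2 (x - t) := by
  obtain ⟨ha₁, ha₂, ht₁, ht₂, ht₃, hx₁, hx₂⟩ := h
  rcases le_or_gt (-1) (x - a) with hv | hv
  · rw [B2_of_nonpos_of_neg_one_le (by linarith) hv]
    rcases le_or_gt (-1) (x - t) with hz | hz
    · rw [B2_of_nonpos_of_neg_one_le (by linarith) hz]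
      nlinarith
    · rw [B2_of_le_neg_one hz.le]
      nlinarith
  · rw [B2_of_le_neg_one hv.le]
    rcases le_or_gt (-1) (x - t) with hz | hz
    · rw [B2_of_nonpos_of_neg_one_le (by linarith) hz]
      nlinarith
    · rw [B2_of_le_neg_one hz.le]
      nlinarith

lemma det_pos (h : IsAdmissible a t x) :
    0 < Matrix.det !![B2 (x + 2*t - 2*a), B2 (x + 2*t - a), 0, 0;
                      B2 (x + t - 2*a), B2 (x + t - a), B2 (x + t), 0;
                      0, B2 (x - a), B2 x, B2 (x + a);
                      0, 0, B2 (x - t), B2 (x - t + a)] := by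
  have ⟨ha₁, ha₂, ht₁, ht₂, ht₃, hx₁, hx₂⟩ := h
  rw [B2_of_nonneg_of_le_one (y := x + 2*t - 2*a) (by linarith) (by linarith),
    B2_of_nonpos_of_neg_one_le (y := x + t - 2*a) (by linarith) (by linarith),
    B2_of_nonneg_of_le_one (y := x + t) (by linarith) (by linarith),
    B2_of_nonpos_of_neg_one_le (y := x) hx₂ (by linarith),
    B2_of_nonneg_of_le_one (y := x + a) (by linarith) (by linarith),
    B2_of_nonpos_of_neg_one_le (y := x - t + a) (by linarith) (by linarith)]
  exact det_fin_four_band_pos (mul_pos (by linarith) (by linarith)) h.mul_le_upper_minor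
    (mul_nonneg (B2_nonneg _) (by linarith)) h.mul_lt_lower_minor

end IsAdmissible

theorem stmt17 (a b : ℝ) (hab : (1/2 ≤ a ∧ a ≤ 4/5 ∧ 4/(2+3*a) < b ∧ b ≤ 6/(2+5*a) ∧ 1 < b))
    (x : ℝ) (hx : x ∈ Set.Icc (-a/2) 0) :
    Matrix.det !![B2 (x + 2/b - 2*a), B2 (x + 2/b - a), 0, 0;
                  B2 (x + 1/b - 2*a), B2 (x + 1/b - a), B2 (x + 1/b), 0;
                  0, B2 (x - a), B2 x, B2 (x + a);
                  0, 0, B2 (x - 1/b), B2 (x - 1/b + a)] ≠ 0 := by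
  rw [show 2 / b = 2 * (1 / b) by ring]
  exact (isAdmissible_one_div hab hx).det_pos.ne'
end

section
/- Let (a,b) ∈ Γ₃ with a ∈ (0, 2/13] and x ∈ [1 - 2/b + a, 0]. Then the determinant of the 3×3 matrix with rows (1-x-1/b+a, 1-x-1/b, 1-x-1/b-a), (1+x-a, 1+x, 1-x-a), (1+x-1/b-a, 1+x-1/b, 1+x-1/b+a) equals -(4a/b)((1-b)x + a(1-b)) = (4a(b-1)/b)(x + a), and this quantity is strictly positive. -/
theorem stmt19 (a b : ℝ) (hab : (0 < a ∧ a < 1/2 ∧ 4/(2+3*a) < b ∧ b ≤ 2/(1+a))) (ha : a ≤ 2/13)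
    (x : ℝ) (hx : x ∈ Set.Icc (1 - 2/b + a) 0) :
    Matrix.det !![1-x-1/b+a, 1-x-1/b, 1-x-1/b-a;
                  1+x-a, 1+x, 1-x-a;
                  1+x-1/b-a, 1+x-1/b, 1+x-1/b+a] =
      (4*a*(b-1)/b) * (x + a) ∧
    0 < (4*a*(b-1)/b) * (x + a) := by
  obtain ⟨ha0, ha2, hb1, hb2⟩ := hab
  have h2a : (0:ℝ) < 2 + 3*a := by linarith
  have hbpos : 0 < b := lt_trans (by positivity) hb1
  have hb1' : 1 < b := by
    have : (4:ℝ)/(2+3*a) > 1 := by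
      rw [gt_iff_lt, lt_div_iff₀ h2a]; linarith
    linarith
  have hxa : 0 < x + a := by
    have h1 : 2/(1+2*a) ≤ 4/(2+3*a) := by
      rw [div_le_div_iff₀ (by linarith) h2a]; linarith
    have h2 : 2/(1+2*a) < b := lt_of_le_of_lt h1 hb1
    have h3 : 2/b < 1 + 2*a := by
      rw [div_lt_iff₀ hbpos]
      rw [div_lt_iff₀ (by linarith : (0:ℝ) < 1+2*a)] at h2
      linarith
    have := hx.1
    linarith
  constructor
  · rw [Matrix.det_fin_three]
    simp [Matrix.cons_val_zero, Matrix.cons_val_one]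
    field_simp
    ring
  · have : 0 < b - 1 := by linarith
    positivity
end
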